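/- arXiv:1811.01800 — 2 statements merged into one kernel-verified Lean document; each statement's English description precedes it below -/
import Mathlib

section
/- Assume K = K(n) = o(√n), E0[X_Γ] = ω(1), and E0[L²] = 1 + o(1) as n → ∞. Then every estimator K̂ of the planted set 𝒦 satisfies ov(K̂) = o(K); that is, reconstruction fails. -/
open scoped Classical BigOperators
open Filter

namespace PlantedStructures

/-- A graph on vertex set `[n]`. -/
abbrev Graph (n : ℕ) := SimpleGraph (Fin n)

/-- Number of edges of a graph on `[n]`. -/
noncomputable def edgeCount {n : ℕ} (G : Graph n) : ℕ := G.edgeSet.ncard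

/-- The Erdős–Rényi probability `ℙ0(G)` of an individual graph `G` on `[n]`,
with edge probability `p`. -/
noncomputable def P0 (n : ℕ) (p : ℝ) (G : Graph n) : ℝ :=
  p ^ edgeCount G * (1 - p) ^ (n.choose 2 - edgeCount G)

/-- Probability of an event under `ℙ0`. -/
noncomputable def Pr0 (n : ℕ) (p : ℝ) (A : Graph n → Prop) : ℝ :=
  ∑ G : Graph n, if A G then P0 n p G else 0

/-- Expectation of a functional of the graph under `ℙ0`. -/
noncomputable def E0 (n : ℕ) (p : ℝ) (f : Graph n → ℝ) : ℝ :=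
  ∑ G : Graph n, P0 n p G * f G

/-- The probability `ℙ1(G)` of an individual graph `G` on `[n]` under the planted
distribution: `G = G0 ⊔ σ(Γ)` where `G0 ~ G(n,p)` and `σ` is a uniformly random
injection of the vertices of `Γ` into `[n]`, independent of `G0`. -/
noncomputable def P1 (n : ℕ) (p : ℝ) {V : Type*} [Fintype V] (Γ : SimpleGraph V)
    (G : Graph n) : ℝ :=
  (∑ σ : V ↪ Fin n, ∑ G0 : Graph n, if G0 ⊔ Γ.map σ = G then P0 n p G0 else 0) /
    (Fintype.card (V ↪ Fin n) : ℝ)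

/-- Probability of a joint event of the planted injection `σ` and the observed
graph `G = G0 ⊔ σ(Γ)`, under the planted distribution. -/
noncomputable def PrJoint (n : ℕ) (p : ℝ) {V : Type*} [Fintype V] (Γ : SimpleGraph V)
    (A : (V ↪ Fin n) → Graph n → Prop) : ℝ :=
  (∑ σ : V ↪ Fin n, ∑ G0 : Graph n, if A σ (G0 ⊔ Γ.map σ) then P0 n p G0 else 0) /
    (Fintype.card (V ↪ Fin n) : ℝ)

/-- Probability of an event under the planted distribution `ℙ1`. -/
noncomputable def Pr1 (n : ℕ) (p : ℝ) {V : Type*} [Fintype V] (Γ : SimpleGraph V)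
    (A : Graph n → Prop) : ℝ :=
  PrJoint n p Γ (fun _ G => A G)

/-- The likelihood ratio `L(G) = ℙ1(G) / ℙ0(G)`. -/
noncomputable def LR (n : ℕ) (p : ℝ) {V : Type*} [Fintype V] (Γ : SimpleGraph V)
    (G : Graph n) : ℝ :=
  P1 n p Γ G / P0 n p G

/-- The number of copies of `Γ` in `G`, i.e. of subgraphs of `G` isomorphic to `Γ`. -/
noncomputable def numCopies {V : Type*} (Γ : SimpleGraph V) {n : ℕ} (G : Graph n) : ℕ :=
  Set.ncard {H : G.Subgraph | Nonempty (H.coe ≃g Γ)}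

/-- Total variation distance between `ℙ1` and `ℙ0`. -/
noncomputable def dTV (n : ℕ) (p : ℝ) {V : Type*} [Fintype V] (Γ : SimpleGraph V) : ℝ :=
  (∑ G : Graph n, |P1 n p Γ G - P0 n p G|) / 2

/-- The planted vertex set `𝒦 = σ([K])`. -/
noncomputable def plantedSet {n : ℕ} {V : Type*} [Fintype V] (σ : V ↪ Fin n) :
    Finset (Fin n) :=
  Finset.univ.map σ

/-- The overlap `ov(K̂) = Σ_{i ∈ [n]} ℙ1(i ∈ K̂(G) ∩ 𝒦)` of an estimator `K̂`. -/
noncomputable def overlap (n : ℕ) (p : ℝ) {V : Type*} [Fintype V] (Γ : SimpleGraph V)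
    (kHat : Graph n → Finset (Fin n)) : ℝ :=
  (∑ σ : V ↪ Fin n, ∑ G0 : Graph n,
      P0 n p G0 * ((kHat (G0 ⊔ Γ.map σ) ∩ plantedSet σ).card : ℝ)) /
    (Fintype.card (V ↪ Fin n) : ℝ)


/-- The star graph with `K` edges: vertex `0` is the center, joined to the `K` leaves. -/
def starGraph (K : ℕ) : SimpleGraph (Fin (K + 1)) :=
  SimpleGraph.fromRel (fun i _ => i = 0)

/-- `inPathEdge K u v` states that `{u, v}` is an edge of the fixed path
`(1 − 2 − ⋯ − K)` on the first `K` vertices of `[n]`. -/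
def inPathEdge (K : ℕ) {n : ℕ} (u v : Fin n) : Prop :=
  u.val < K ∧ v.val < K ∧ (u.val + 1 = v.val ∨ v.val + 1 = u.val)

/-- The number of ordered `K`-paths in `G`: ordered tuples of `K` distinct vertices
in which consecutive vertices are adjacent in `G`. -/
noncomputable def numOrderedPaths (n K : ℕ) (G : Graph n) : ℕ :=
  Set.ncard {f : Fin K ↪ Fin n |
    ∀ (i : ℕ) (h : i + 1 < K), G.Adj (f ⟨i, Nat.lt_of_succ_lt h⟩) (f ⟨i + 1, h⟩)}

/-- The number `S` of edges that the ordered `K`-path `f` has in common with the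
fixed path `(1 − 2 − ⋯ − K)`. -/
noncomputable def commonEdges (n K : ℕ) (f : Fin K ↪ Fin n) : ℕ :=
  ((Finset.range K).filter (fun i =>
    ∃ h : i + 1 < K, inPathEdge K (f ⟨i, Nat.lt_of_succ_lt h⟩) (f ⟨i + 1, h⟩))).card

/-- The number of indices `1 ≤ t ≤ m` with `Z_t = 1`, i.e. `Σ_{t=1}^m Z_t⁺`, for the
random path given by the injection `f`. -/
noncomputable def zPlusSum (n K m : ℕ) (f : Fin K ↪ Fin n) : ℕ :=
  ((Finset.range m).filter (fun i =>
    ∃ h : i + 1 < K, inPathEdge K (f ⟨i, Nat.lt_of_succ_lt h⟩) (f ⟨i + 1, h⟩))).card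

/-- `z⁺` for the three states `−1, 0, 1` (encoded as `0, 1, 2 : Fin 3`). -/
def statePlus : Fin 3 → ℕ := ![0, 0, 1]

/-- Initial distribution of the Markov chain `Z′`:
`ℙ(Z′_1 = 1) = (K/n′)(2/n′)`, `ℙ(Z′_1 ≥ 0) = K/n′`, where `n′ = n − K`. -/
noncomputable def chainInit (n K : ℕ) : Fin 3 → ℝ :=
  ![1 - K / ((n : ℝ) - K),
    K / ((n : ℝ) - K) - 2 * K / ((n : ℝ) - K) ^ 2,
    2 * K / ((n : ℝ) - K) ^ 2]

/-- Transition matrix of the Markov chain `Z′` on states `−1, 0, 1`. -/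
noncomputable def chainTrans (n K : ℕ) : Fin 3 → Fin 3 → ℝ :=
  ![![1 - K / ((n : ℝ) - K), K / ((n : ℝ) - K), 0],
    ![1 - K / ((n : ℝ) - K), ((K : ℝ) - 2) / ((n : ℝ) - K), 2 / ((n : ℝ) - K)],
    ![1 - K / ((n : ℝ) - K), ((K : ℝ) - 1) / ((n : ℝ) - K), 1 / ((n : ℝ) - K)]]

/-- `chainF n K x t s = E[x^{Σ_{u=1}^{t+1} Z′_u⁺} ⬝ 1{Z′_{t+1} = s}]`. -/
noncomputable def chainF (n K : ℕ) (x : ℝ) : ℕ → Fin 3 → ℝ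
  | 0 => fun s => chainInit n K s * x ^ statePlus s
  | (t + 1) => fun s =>
      (∑ s' : Fin 3, chainF n K x t s' * chainTrans n K s' s) * x ^ statePlus s

/-- `E[x^{Σ_{t=1}^m Z′_t⁺}]` for the Markov chain `Z′`. -/
noncomputable def chainExp (n K : ℕ) (x : ℝ) (m : ℕ) : ℝ :=
  ∑ s : Fin 3, chainF n K x (m - 1) s

/-- `ψ_D(μ) = ℙ(Poisson(μ) ≥ D)`. -/
noncomputable def psi (D : ℕ) (μ : ℝ) : ℝ :=
  1 - ∑ j ∈ Finset.range D, Real.exp (-μ) * μ ^ j / (Nat.factorial j)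

/-- `p*(D,λ)`: the largest nonnegative root of `p = ψ_D(λ p)`. -/
noncomputable def pstar (D : ℕ) (lam : ℝ) : ℝ :=
  sSup {p : ℝ | 0 ≤ p ∧ p = psi D (lam * p)}

/-- `λ_D = sup{λ > 0 : p*(D,λ) = 0}`, the threshold for emergence of the `D`-core. -/
noncomputable def lambdaD (D : ℕ) : ℝ :=
  sSup {lam : ℝ | 0 < lam ∧ pstar D lam = 0}

/-- The sequence `p_h` (for `h ≥ 1`): `p_1 = 1`, `p_{h+1} = ψ_D(λ p_h)`. -/
noncomputable def pseq (D : ℕ) (lam : ℝ) : ℕ → ℝ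
  | 0 => 1
  | 1 => 1
  | (h + 2) => psi D (lam * pseq D lam (h + 1))

/-- `h̄(n) = inf{h ≥ 1 : p_h < 1/n}`. -/
noncomputable def hbar (D : ℕ) (lam : ℝ) (n : ℕ) : ℕ :=
  sInf {h : ℕ | 1 ≤ h ∧ pseq D lam h < 1 / n}

/-- `h̲(n) = sup{h ≥ 1 : p_h > ln(n)/n}`. -/
noncomputable def hlow (D : ℕ) (lam : ℝ) (n : ℕ) : ℕ :=
  sSup {h : ℕ | 1 ≤ h ∧ Real.log n / n < pseq D lam h}

/-- The vertex type of the complete `D`-ary tree of height `h`: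
`D^ℓ` vertices at each depth `0 ≤ ℓ ≤ h`. -/
abbrev DaryVertex (D h : ℕ) : Type := Σ ℓ : Fin (h + 1), Fin (D ^ (ℓ : ℕ))

/-- The complete `D`-ary tree of height `h`: every vertex at depth `ℓ < h` has exactly
`D` children; the vertex `m` at depth `ℓ + 1` has parent `m / D` at depth `ℓ`. -/
def daryTree (D h : ℕ) : SimpleGraph (DaryVertex D h) :=
  SimpleGraph.fromRel (fun u v =>
    (u.1 : ℕ) + 1 = (v.1 : ℕ) ∧ (v.2 : ℕ) / D = (u.2 : ℕ))

/-- Neighbourhood of a vertex, as a `Finset`. -/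
noncomputable def nbhd {n : ℕ} (G : Graph n) (v : Fin n) : Finset (Fin n) :=
  Finset.univ.filter (fun w => G.Adj v w)

/-- `v` is a vertex of maximal degree in `G`. -/
def isMaxDegVertex {n : ℕ} (G : Graph n) (v : Fin n) : Prop :=
  ∀ w : Fin n, (nbhd G w).card ≤ (nbhd G v).card

/-- Degree of `v` inside the vertex set `S` (for the peeling operation). -/
noncomputable def degIn {n : ℕ} (G : Graph n) (S : Finset (Fin n)) (v : Fin n) : ℕ :=
  (S.filter (fun w => G.Adj v w)).card

/-- One peeling operation: remove from `S` all vertices of degree one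
(in the subgraph of `G` induced on `S`). -/
noncomputable def peel {n : ℕ} (G : Graph n) (S : Finset (Fin n)) : Finset (Fin n) :=
  S.filter (fun v => degIn G S v ≠ 1)

/-- The vertex set of a connected component, as a `Finset`. -/
noncomputable def componentFinset {n : ℕ} (G : Graph n) (c : G.ConnectedComponent) :
    Finset (Fin n) :=
  Finset.univ.filter (fun w => G.connectedComponentMk w = c)

/-- The set `S` contains a longest path of `G`. -/
def containsLongestPath {n : ℕ} (G : Graph n) (S : Finset (Fin n)) : Prop :=
  ∃ (u v : Fin n) (p : G.Walk u v), p.IsPath ∧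
    (∀ (u' v' : Fin n) (q : G.Walk u' v'), q.IsPath → q.length ≤ p.length) ∧
    (∀ w ∈ p.support, w ∈ S)


/-- The proportion `I_Γ` of ordered pairs of copies of `Γ` in `G` whose vertex sets
intersect (set to `0` when `G` contains no copy of `Γ`). -/
noncomputable def IGamma {V : Type*} (Γ : SimpleGraph V) {n : ℕ} (G : Graph n) : ℝ :=
  if numCopies Γ G = 0 then 0
  else
    (Set.ncard {H : G.Subgraph × G.Subgraph |
        Nonempty (H.1.coe ≃g Γ) ∧ Nonempty (H.2.coe ≃g Γ) ∧ (H.1.verts ∩ H.2.verts).Nonempty} : ℝ)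
      / (numCopies Γ G : ℝ) ^ 2

/-- The overlap of the randomized star estimator which outputs the max-degree vertex
`vstar G` together with `K` of its neighbours chosen uniformly at random:
`Σ_i ℙ1(i ∈ K̂(G) ∩ 𝒦)`, averaging over the planted injection `σ`, the graph `G0` and
the uniformly random `K`-subset of neighbours. -/
noncomputable def starEstOverlap (n K : ℕ) (p : ℝ) (vstar : Graph n → Fin n) : ℝ :=
  (∑ σ : Fin (K + 1) ↪ Fin n, ∑ G0 : Graph n, P0 n p G0 *
      ((if vstar (G0 ⊔ (starGraph K).map σ) ∈ plantedSet σ then (1 : ℝ) else 0) +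
        (∑ S ∈ (nbhd (G0 ⊔ (starGraph K).map σ)
              (vstar (G0 ⊔ (starGraph K).map σ))).powersetCard K,
            ((S ∩ plantedSet σ).card : ℝ)) /
          (((nbhd (G0 ⊔ (starGraph K).map σ)
              (vstar (G0 ⊔ (starGraph K).map σ))).powersetCard K).card : ℝ))) /
    (Fintype.card (Fin (K + 1) ↪ Fin n) : ℝ)

/-!
Given `G`, the planted embedding `σ` is uniform on the embeddings of `Γ` into `G`, so the
overlap equals `E0[∑_{i ∈ K̂} Y_i] / E0[X]`, where `X` counts the embeddings of `Γ` into `G`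
and `Y_i` those whose image contains `i`. By Cauchy–Schwarz and Jensen it is at most
`√(K · E0[∑_i Y_i²]) / E0[X]`. Now `E0[∑_i Y_i²] = ∑_{σ,σ'} |σ(V) ∩ σ'(V)| p^{e(σΓ ∪ σ'Γ)}`;
writing `p^{e(σΓ ∪ σ'Γ)}` as `p^{2e}` plus a nonnegative excess, the `p^{2e}` part contributes
`E0[X]² K²/n` (each vertex lies in a `K/n` fraction of the images), and the excess, weighted by
at most `K`, sums to `K · Var0(X) = K (E0[L²] - 1) E0[X]²`. Hence
`ov / K ≤ √(K/n + E0[L²] - 1)`, which tends to `0`.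
-/

open Finset

section EdgeCount

variable {n : ℕ}

lemma edgeCount_eq_card_edgeFinset (G : Graph n) : edgeCount G = #G.edgeFinset := by
  rw [edgeCount, SimpleGraph.edgeFinset, Set.ncard_eq_toFinset_card']

lemma edgeCount_mono {G H : Graph n} (h : G ≤ H) : edgeCount G ≤ edgeCount H :=
  Set.ncard_le_ncard (SimpleGraph.edgeSet_mono h) (Set.toFinite _)

lemma edgeCount_sup_of_disjoint {G H : Graph n} (h : Disjoint G H) :
    edgeCount (G ⊔ H) = edgeCount G + edgeCount H := by
  rw [edgeCount, SimpleGraph.edgeSet_sup,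
    Set.ncard_union_eq (SimpleGraph.disjoint_edgeSet.2 h) (Set.toFinite _) (Set.toFinite _)]
  rfl

lemma edgeCount_sup_le (G H : Graph n) : edgeCount (G ⊔ H) ≤ edgeCount G + edgeCount H := by
  rw [edgeCount, SimpleGraph.edgeSet_sup]
  exact Set.ncard_union_le _ _

lemma edgeCount_bot : edgeCount (⊥ : Graph n) = 0 := by
  rw [edgeCount, SimpleGraph.edgeSet_bot, Set.ncard_empty]

lemma edgeCount_top : edgeCount (⊤ : Graph n) = n.choose 2 := by
  have h := SimpleGraph.card_edgeFinset_top_eq_card_choose_two (V := Fin n)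
  rw [Fintype.card_fin] at h
  rw [edgeCount_eq_card_edgeFinset, ← h]
  congr 1
  exact Finset.coe_injective (by simp)

lemma edgeCount_le_choose_two (G : Graph n) : edgeCount G ≤ n.choose 2 :=
  edgeCount_top (n := n) ▸ edgeCount_mono le_top

lemma edgeCount_map {V : Type*} (Γ : SimpleGraph V) (σ : V ↪ Fin n) :
    edgeCount (Γ.map σ) = Γ.edgeSet.ncard := by
  rw [edgeCount, SimpleGraph.edgeSet_map, Set.ncard_image_of_injective _ σ.sym2Map.injective]

end EdgeCount

section ErdosRenyi

variable {n : ℕ}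

lemma sum_le_pow_mul_pow (p q : ℝ) (D : Graph n) :
    ∑ W : Graph n with W ≤ D, p ^ edgeCount W * q ^ (edgeCount D - edgeCount W)
      = (p + q) ^ edgeCount D := by
  simp only [edgeCount_eq_card_edgeFinset]
  rw [← sum_pow_mul_eq_add_pow]
  refine sum_nbij' (fun W => W.edgeFinset) (fun t => SimpleGraph.fromEdgeSet t) ?_ ?_ ?_ ?_ ?_
  · intro W hW
    simp only [mem_filter, mem_univ, true_and] at hW
    exact mem_powerset.2 (SimpleGraph.edgeFinset_mono hW)
  · intro t ht
    simp only [mem_powerset] at ht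
    simp only [mem_filter, mem_univ, true_and]
    intro u v huv
    simpa using SimpleGraph.mem_edgeFinset.1 (ht huv.1)
  · intro W _
    simp
  · intro t ht
    simp only [mem_powerset] at ht
    ext e
    simp only [SimpleGraph.mem_edgeFinset, SimpleGraph.edgeSet_fromEdgeSet, Set.mem_sdiff,
      mem_coe, and_iff_left_iff_imp]
    exact fun he => SimpleGraph.not_isDiag_of_mem_edgeSet D (SimpleGraph.mem_edgeFinset.1 (ht he))
  · intro W _
    rfl

lemma sum_Icc_pow_mul_pow (p q : ℝ) {H D : Graph n} (hHD : H ≤ D) :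
    ∑ G : Graph n with H ≤ G ∧ G ≤ D, p ^ edgeCount G * q ^ (edgeCount D - edgeCount G)
      = p ^ edgeCount H * (p + q) ^ (edgeCount D - edgeCount H) := by
  have hsplit : ∀ G, H ≤ G → edgeCount G = edgeCount H + edgeCount (G \ H) := fun G hG => by
    rw [← edgeCount_sup_of_disjoint disjoint_sdiff_self_right, sup_sdiff_cancel_right hG]
  rw [hsplit D hHD, Nat.add_sub_cancel_left, ← sum_le_pow_mul_pow, mul_sum]
  refine sum_nbij' (· \ H) (H ⊔ ·) ?_ ?_ ?_ ?_ ?_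
  · intro G hG
    simp only [mem_filter, mem_univ, true_and] at hG ⊢
    exact sdiff_le_sdiff_right hG.2
  · intro W hW
    simp only [mem_filter, mem_univ, true_and] at hW ⊢
    exact ⟨le_sup_left, sup_le hHD (hW.trans sdiff_le)⟩
  · intro G hG
    simp only [mem_filter, mem_univ, true_and] at hG
    exact sup_sdiff_cancel_right hG.1
  · intro W hW
    simp only [mem_filter, mem_univ, true_and] at hW
    exact (disjoint_sdiff_self_right.mono_right hW).sup_sdiff_cancel_left
  · intro G hG
    simp only [mem_filter, mem_univ, true_and] at hG
    rw [hsplit G hG.1, Nat.add_sub_add_left, pow_add, mul_assoc]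

lemma P0_nonneg {p : ℝ} (hp0 : 0 ≤ p) (hp1 : p ≤ 1) (G : Graph n) : 0 ≤ P0 n p G :=
  mul_nonneg (pow_nonneg hp0 _) (pow_nonneg (sub_nonneg.2 hp1) _)

lemma P0_pos {p : ℝ} (hp0 : 0 < p) (hp1 : p < 1) (G : Graph n) : 0 < P0 n p G :=
  mul_pos (pow_pos hp0 _) (pow_pos (sub_pos.2 hp1) _)

lemma E0_indicator_le (p : ℝ) (H : Graph n) :
    E0 n p (fun G => if H ≤ G then 1 else 0) = p ^ edgeCount H := by
  have key := sum_Icc_pow_mul_pow p (1 - p) (le_top : H ≤ ⊤)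
  simp only [le_top, and_true, edgeCount_top, add_sub_cancel, one_pow, mul_one] at key
  simpa [E0, P0, sum_filter] using key

lemma sum_P0 (p : ℝ) : ∑ G : Graph n, P0 n p G = 1 := by
  simpa [E0, edgeCount_bot] using E0_indicator_le p (⊥ : Graph n)

lemma E0_sum {ι : Type*} (p : ℝ) (s : Finset ι) (f : ι → Graph n → ℝ) :
    E0 n p (fun G => ∑ i ∈ s, f i G) = ∑ i ∈ s, E0 n p (f i) := by
  simp only [E0, mul_sum]
  exact sum_comm

lemma E0_const_mul (p c : ℝ) (f : Graph n → ℝ) :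
    E0 n p (fun G => c * f G) = c * E0 n p f := by
  simp only [E0, mul_sum, mul_left_comm]

lemma E0_mono {p : ℝ} (hp0 : 0 ≤ p) (hp1 : p ≤ 1) {f g : Graph n → ℝ}
    (hfg : ∀ G, f G ≤ g G) : E0 n p f ≤ E0 n p g :=
  sum_le_sum fun G _ => mul_le_mul_of_nonneg_left (hfg G) (P0_nonneg hp0 hp1 G)

lemma sq_E0_le_E0_sq {p : ℝ} (hp0 : 0 ≤ p) (hp1 : p ≤ 1) (f : Graph n → ℝ) :
    E0 n p f ^ 2 ≤ E0 n p (fun G => f G ^ 2) := by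
  have h := sum_sq_le_sum_mul_sum_of_sq_le_mul univ (r := fun G => P0 n p G * f G)
    (fun G _ => P0_nonneg hp0 hp1 G)
    (fun G _ => mul_nonneg (P0_nonneg hp0 hp1 G) (sq_nonneg (f G)))
    (fun G _ => le_of_eq (by ring))
  rwa [sum_P0, one_mul] at h

lemma sum_P0_sup_eq {p : ℝ} (hp : p ≠ 0) (H G : Graph n) :
    ∑ G0 : Graph n with G0 ⊔ H = G, P0 n p G0
      = if H ≤ G then P0 n p G / p ^ edgeCount H else 0 := by
  split_ifs with hHG
  · have hfiber : univ.filter (fun G0 : Graph n => G0 ⊔ H = G)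
        = univ.filter (fun G0 => G \ H ≤ G0 ∧ G0 ≤ G) := by
      ext G0
      simp only [mem_filter, mem_univ, true_and]
      constructor
      · rintro rfl
        exact ⟨sdiff_le_iff.2 (sup_comm G0 H).le, le_sup_left⟩
      · rintro ⟨h1, h2⟩
        exact le_antisymm (sup_le h2 hHG) ((sdiff_le_iff.1 h1).trans (sup_comm H G0).le)
    have hsplit : edgeCount G = edgeCount (G \ H) + edgeCount H := by
      rw [← edgeCount_sup_of_disjoint disjoint_sdiff_self_left, sdiff_sup_cancel hHG]
    have hterm : ∀ G0 ∈ univ.filter (fun G0 : Graph n => G \ H ≤ G0 ∧ G0 ≤ G), P0 n p G0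
        = (1 - p) ^ (n.choose 2 - edgeCount G) *
          (p ^ edgeCount G0 * (1 - p) ^ (edgeCount G - edgeCount G0)) := by
      intro G0 hG0
      have h1 := edgeCount_mono (mem_filter.1 hG0).2.2
      have h2 := edgeCount_le_choose_two G
      rw [P0, show n.choose 2 - edgeCount G0
        = (n.choose 2 - edgeCount G) + (edgeCount G - edgeCount G0) by omega, pow_add]
      ring
    rw [hfiber, sum_congr rfl hterm, ← mul_sum, sum_Icc_pow_mul_pow p (1 - p) sdiff_le,
      add_sub_cancel, one_pow, mul_one, eq_div_iff (pow_ne_zero _ hp), P0, hsplit, pow_add]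
    ring
  · refine sum_eq_zero fun G0 hG0 => absurd ?_ hHG
    rw [← (mem_filter.1 hG0).2]
    exact le_sup_right

lemma E0_comp_sup {p : ℝ} (hp : p ≠ 0) (H : Graph n) (f : Graph n → ℝ) :
    E0 n p (fun G0 => f (G0 ⊔ H))
      = E0 n p (fun G => if H ≤ G then f G else 0) / p ^ edgeCount H := by
  rw [E0, ← sum_fiberwise univ (· ⊔ H), E0, sum_div]
  refine sum_congr rfl fun G _ => ?_
  rw [sum_congr rfl fun G0 hG0 => by rw [(mem_filter.1 hG0).2], ← sum_mul, sum_P0_sup_eq hp]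
  split_ifs <;> ring

end ErdosRenyi

section Embeddings

variable {n : ℕ} {V : Type*} [Fintype V]

lemma card_embedding_pos (hVn : Fintype.card V ≤ n) : 0 < Fintype.card (V ↪ Fin n) :=
  Fintype.card_pos_iff.2 (Function.Embedding.nonempty_of_card_le (by rwa [Fintype.card_fin]))

lemma mem_plantedSet {i : Fin n} {σ : V ↪ Fin n} : i ∈ plantedSet σ ↔ ∃ v, σ v = i := by
  simp [plantedSet]

lemma card_filter_mem_plantedSet_eq (i j : Fin n) :
    #{σ : V ↪ Fin n | i ∈ plantedSet σ} = #{σ : V ↪ Fin n | j ∈ plantedSet σ} := by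
  refine card_nbij' (·.trans (Equiv.swap i j).toEmbedding) (·.trans (Equiv.swap i j).toEmbedding)
    ?_ ?_ ?_ ?_ <;> intro σ hσ
  iterate 2
    simp only [coe_filter, mem_univ, true_and, Set.mem_ofPred_eq, mem_plantedSet] at hσ ⊢
    obtain ⟨v, rfl⟩ := hσ
    exact ⟨v, by simp⟩
  all_goals ext; simp

lemma sum_card_filter_mem_plantedSet :
    ∑ i : Fin n, #{σ : V ↪ Fin n | i ∈ plantedSet σ}
      = Fintype.card (V ↪ Fin n) * Fintype.card V := by
  simp only [card_filter]
  rw [sum_comm]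
  simp only [← card_filter, filter_mem_eq_inter, univ_inter]
  simp [plantedSet, mul_comm]

lemma card_mul_card_filter_mem_plantedSet (i : Fin n) :
    n * #{σ : V ↪ Fin n | i ∈ plantedSet σ} = Fintype.card (V ↪ Fin n) * Fintype.card V := by
  rw [← sum_card_filter_mem_plantedSet, sum_congr rfl fun j _ => card_filter_mem_plantedSet_eq j i]
  simp

lemma sum_sq_card_filter_mem_plantedSet (s : Finset (V ↪ Fin n)) :
    ∑ i, #{σ ∈ s | i ∈ plantedSet σ} ^ 2
      = ∑ σ ∈ s, ∑ σ' ∈ s, #(plantedSet σ ∩ plantedSet σ') := by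
  simp only [card_filter, sq, sum_mul_sum]
  rw [sum_comm]
  refine sum_congr rfl fun σ _ => ?_
  rw [sum_comm]
  refine sum_congr rfl fun σ' _ => ?_
  simp only [ite_zero_mul_ite_zero, mul_one, ← card_filter, ← mem_inter, filter_mem_eq_inter,
    univ_inter]

lemma card_mul_sum_card_inter_plantedSet :
    n * ∑ σ : V ↪ Fin n, ∑ σ' : V ↪ Fin n, #(plantedSet σ ∩ plantedSet σ')
      = (Fintype.card (V ↪ Fin n) * Fintype.card V) ^ 2 := by
  calc n * ∑ σ : V ↪ Fin n, ∑ σ' : V ↪ Fin n, #(plantedSet σ ∩ plantedSet σ')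
      = ∑ i : Fin n, n * #{σ : V ↪ Fin n | i ∈ plantedSet σ} * #{σ | i ∈ plantedSet σ} := by
        rw [← sum_sq_card_filter_mem_plantedSet univ, mul_sum]
        simp only [sq, mul_assoc]
        rfl
    _ = _ := by
        simp only [card_mul_card_filter_mem_plantedSet, ← mul_sum]
        rw [sum_card_filter_mem_plantedSet, sq]

lemma sum_card_inter_plantedSet (E : Finset (V ↪ Fin n)) (s : Finset (Fin n)) :
    ∑ σ ∈ E, #(s ∩ plantedSet σ) = ∑ i ∈ s, #{σ ∈ E | i ∈ plantedSet σ} := by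
  simpa [bipartiteAbove, bipartiteBelow, filter_mem_eq_inter] using
    sum_card_bipartiteAbove_eq_sum_card_bipartiteBelow (s := E) (t := s)
      (r := fun σ i => i ∈ plantedSet σ)

variable (Γ : SimpleGraph V)

noncomputable def embeddings (G : Graph n) : Finset (V ↪ Fin n) := {σ | Γ.map σ ≤ G}

lemma card_embeddings_eq_sum (G : Graph n) :
    (#(embeddings Γ G) : ℝ) = ∑ σ : V ↪ Fin n, if Γ.map σ ≤ G then 1 else 0 := by
  rw [embeddings, card_filter]
  push_cast
  rfl

lemma P1_eq {p : ℝ} (hp : p ≠ 0) (G : Graph n) :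
    P1 n p Γ G = #(embeddings Γ G) * P0 n p G /
      (p ^ Γ.edgeSet.ncard * Fintype.card (V ↪ Fin n)) := by
  simp only [P1, ← sum_filter, sum_P0_sup_eq hp, edgeCount_map]
  rw [sum_const, nsmul_eq_mul, embeddings]
  ring

lemma LR_eq {p : ℝ} (hp0 : 0 < p) (hp1 : p < 1) (G : Graph n) :
    LR n p Γ G = #(embeddings Γ G) / (p ^ Γ.edgeSet.ncard * Fintype.card (V ↪ Fin n)) := by
  rw [LR, P1_eq Γ hp0.ne', mul_div_right_comm, mul_div_cancel_right₀ _ (P0_pos hp0 hp1 G).ne']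

lemma E0_card_embeddings_sq (p : ℝ) :
    E0 n p (fun G => (#(embeddings Γ G) : ℝ) ^ 2)
      = ∑ σ : V ↪ Fin n, ∑ σ' : V ↪ Fin n, p ^ edgeCount (Γ.map σ ⊔ Γ.map σ') := by
  simp only [card_embeddings_eq_sum, sq, sum_mul_sum, ite_zero_mul_ite_zero, mul_one,
    ← sup_le_iff, E0_sum, E0_indicator_le]

lemma E0_card_embeddings_sq_eq {p : ℝ} (hp0 : 0 < p) (hp1 : p < 1) (hVn : Fintype.card V ≤ n) :
    E0 n p (fun G => (#(embeddings Γ G) : ℝ) ^ 2)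
      = E0 n p (fun G => LR n p Γ G ^ 2) *
        (p ^ Γ.edgeSet.ncard * Fintype.card (V ↪ Fin n)) ^ 2 := by
  have hM : p ^ Γ.edgeSet.ncard * (Fintype.card (V ↪ Fin n) : ℝ) ≠ 0 :=
    mul_ne_zero (pow_ne_zero _ hp0.ne') (Nat.cast_ne_zero.2 (card_embedding_pos hVn).ne')
  rw [mul_comm, ← E0_const_mul]
  congr 1
  funext G
  rw [LR_eq Γ hp0 hp1, div_pow, mul_div_cancel₀ _ (pow_ne_zero 2 hM)]

lemma overlap_eq_E0 {p : ℝ} (hp : p ≠ 0) (kHat : Graph n → Finset (Fin n)) :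
    overlap n p Γ kHat
      = E0 n p (fun G => ∑ i ∈ kHat G, (#{σ ∈ embeddings Γ G | i ∈ plantedSet σ} : ℝ)) /
        (p ^ Γ.edgeSet.ncard * Fintype.card (V ↪ Fin n)) := by
  change (∑ σ : V ↪ Fin n, E0 n p (fun G0 => (#(kHat (G0 ⊔ Γ.map σ) ∩ plantedSet σ) : ℝ))) / _ = _
  rw [sum_congr rfl fun (σ : V ↪ Fin n) _ =>
    E0_comp_sup hp (Γ.map σ) fun G => (#(kHat G ∩ plantedSet σ) : ℝ)]
  simp only [edgeCount_map, ← sum_div, ← E0_sum, div_div]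
  congr 3
  funext G
  rw [← sum_filter]
  exact_mod_cast sum_card_inter_plantedSet (embeddings Γ G) (kHat G)

lemma E0_sum_sq_card_filter_mem_plantedSet (p : ℝ) :
    E0 n p (fun G => ∑ i, (#{σ ∈ embeddings Γ G | i ∈ plantedSet σ} : ℝ) ^ 2)
      = ∑ σ : V ↪ Fin n, ∑ σ' : V ↪ Fin n,
          #(plantedSet σ ∩ plantedSet σ') * p ^ edgeCount (Γ.map σ ⊔ Γ.map σ') := by
  have hpair : ∀ G : Graph n, ∑ i, (#{σ ∈ embeddings Γ G | i ∈ plantedSet σ} : ℝ) ^ 2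
      = ∑ σ : V ↪ Fin n, ∑ σ' : V ↪ Fin n,
          (#(plantedSet σ ∩ plantedSet σ') : ℝ) * if Γ.map σ ⊔ Γ.map σ' ≤ G then 1 else 0 := by
    intro G
    have h := congrArg (Nat.cast (R := ℝ)) (sum_sq_card_filter_mem_plantedSet (embeddings Γ G))
    push_cast at h
    rw [h]
    simp only [embeddings, sum_filter, sup_le_iff, ite_and, mul_ite, mul_one, mul_zero,
      sum_ite_irrel, sum_const_zero]
  simp only [hpair, E0_sum, E0_const_mul, E0_indicator_le]

lemma E0_sum_sq_card_filter_mem_plantedSet_le {p : ℝ} (hp0 : 0 ≤ p) (hp1 : p ≤ 1) (hn : 0 < n) :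
    E0 n p (fun G => ∑ i, (#{σ ∈ embeddings Γ G | i ∈ plantedSet σ} : ℝ) ^ 2)
      ≤ Fintype.card V * (E0 n p (fun G => (#(embeddings Γ G) : ℝ) ^ 2)
          - (p ^ Γ.edgeSet.ncard * Fintype.card (V ↪ Fin n)) ^ 2)
        + (p ^ Γ.edgeSet.ncard * Fintype.card (V ↪ Fin n)) ^ 2 * Fintype.card V ^ 2 / n := by
  set e := Γ.edgeSet.ncard
  have hinter : ∑ σ : V ↪ Fin n, ∑ σ' : V ↪ Fin n, (#(plantedSet σ ∩ plantedSet σ') : ℝ)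
      = (Fintype.card (V ↪ Fin n) * (Fintype.card V : ℝ)) ^ 2 / n := by
    rw [eq_div_iff (by positivity), mul_comm]
    exact_mod_cast card_mul_sum_card_inter_plantedSet (n := n) (V := V)
  have hpair : ∀ σ σ' : V ↪ Fin n,
      (#(plantedSet σ ∩ plantedSet σ') : ℝ) * p ^ edgeCount (Γ.map σ ⊔ Γ.map σ')
        ≤ #(plantedSet σ ∩ plantedSet σ') * p ^ (2 * e)
          + (Fintype.card V : ℝ) * (p ^ edgeCount (Γ.map σ ⊔ Γ.map σ') - p ^ (2 * e)) := by
    intro σ σ'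
    have hcard : (#(plantedSet σ ∩ plantedSet σ') : ℝ) ≤ (Fintype.card V : ℝ) := by
      exact_mod_cast (card_le_card inter_subset_left).trans (by simp [plantedSet])
    have hpow : p ^ (2 * e) ≤ p ^ edgeCount (Γ.map σ ⊔ Γ.map σ') :=
      pow_le_pow_of_le_one hp0 hp1
        ((edgeCount_sup_le _ _).trans (by rw [edgeCount_map, edgeCount_map, two_mul]))
    nlinarith [mul_le_mul_of_nonneg_right hcard (sub_nonneg.2 hpow)]
  rw [E0_sum_sq_card_filter_mem_plantedSet, E0_card_embeddings_sq]
  refine (sum_le_sum fun σ _ => sum_le_sum fun σ' _ => hpair σ σ').trans (le_of_eq ?_)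
  simp only [sum_add_distrib, ← sum_mul, ← mul_sum, sum_sub_distrib, sum_const, card_univ,
    nsmul_eq_mul, hinter, pow_mul']
  ring

lemma overlap_sq_le {p : ℝ} (hp0 : 0 < p) (hp1 : p < 1) (hn : 0 < n) (hVn : Fintype.card V ≤ n)
    (kHat : Graph n → Finset (Fin n)) (hkHat : ∀ G, #(kHat G) ≤ Fintype.card V) :
    overlap n p Γ kHat ^ 2 ≤ (Fintype.card V : ℝ) ^ 2 *
      (Fintype.card V / n + E0 n p (fun G => LR n p Γ G ^ 2) - 1) := by
  set M := p ^ Γ.edgeSet.ncard * (Fintype.card (V ↪ Fin n) : ℝ)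
  set Y : Graph n → Fin n → ℝ := fun G i => #{σ ∈ embeddings Γ G | i ∈ plantedSet σ}
  have hM : 0 < M := mul_pos (pow_pos hp0 _) (Nat.cast_pos.2 (card_embedding_pos hVn))
  have hCS : ∀ G, (∑ i ∈ kHat G, Y G i) ^ 2 ≤ Fintype.card V * ∑ i, Y G i ^ 2 := fun G =>
    calc (∑ i ∈ kHat G, Y G i) ^ 2 ≤ #(kHat G) * ∑ i ∈ kHat G, Y G i ^ 2 :=
          sq_sum_le_card_mul_sum_sq
      _ ≤ Fintype.card V * ∑ i, Y G i ^ 2 := by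
          gcongr
          · exact_mod_cast hkHat G
          · exact subset_univ _
  have hW := E0_sum_sq_card_filter_mem_plantedSet_le Γ hp0.le hp1.le hn
  rw [E0_card_embeddings_sq_eq Γ hp0 hp1 hVn] at hW
  rw [overlap_eq_E0 Γ hp0.ne', div_pow]
  calc E0 n p (fun G => ∑ i ∈ kHat G, Y G i) ^ 2 / M ^ 2
      ≤ E0 n p (fun G => (∑ i ∈ kHat G, Y G i) ^ 2) / M ^ 2 := by
        gcongr
        exact sq_E0_le_E0_sq hp0.le hp1.le _
    _ ≤ Fintype.card V * E0 n p (fun G => ∑ i, Y G i ^ 2) / M ^ 2 := by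
        gcongr
        rw [← E0_const_mul]
        exact E0_mono hp0.le hp1.le hCS
    _ ≤ Fintype.card V * (Fintype.card V * (E0 n p (fun G => LR n p Γ G ^ 2) * M ^ 2 - M ^ 2)
          + M ^ 2 * Fintype.card V ^ 2 / n) / M ^ 2 := by
        gcongr
    _ = _ := by
        field_simp
        ring

lemma abs_overlap_div_le {p : ℝ} (hp0 : 0 < p) (hp1 : p < 1) (hn : 0 < n)
    (hVn : Fintype.card V ≤ n) (kHat : Graph n → Finset (Fin n))
    (hkHat : ∀ G, #(kHat G) ≤ Fintype.card V) :
    |overlap n p Γ kHat / Fintype.card V|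
      ≤ √(Fintype.card V / n + E0 n p (fun G => LR n p Γ G ^ 2) - 1) := by
  rcases Nat.eq_zero_or_pos (Fintype.card V) with hK | hK
  · simp [hK]
  · apply Real.abs_le_sqrt
    rw [div_pow, div_le_iff₀ (by positivity), mul_comm]
    exact overlap_sq_le Γ hp0 hp1 hn hVn kHat hkHat

end Embeddings

theorem statement_4_general (lam : ℝ) (hlam : 0 < lam) (K : ℕ → ℕ)
    (Γ : (n : ℕ) → SimpleGraph (Fin (K n)))
    (hK : Tendsto (fun n => (K n : ℝ) / Real.sqrt n) atTop (nhds 0))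
    (hL : Tendsto (fun n => E0 n (lam / n) (fun G => LR n (lam / n) (Γ n) G ^ 2))
      atTop (nhds 1))
    (kHat : (n : ℕ) → Graph n → Finset (Fin n))
    (hcard : ∀ᶠ n : ℕ in atTop, ∀ G : Graph n, (kHat n G).card = K n) :
    Tendsto (fun n => overlap n (lam / n) (Γ n) (kHat n) / K n) atTop (nhds 0) := by
  have hKn : Tendsto (fun n : ℕ => (K n : ℝ) / n) atTop (nhds 0) := by
    refine (hK.div_atTop (Real.tendsto_sqrt_atTop.comp tendsto_natCast_atTop_atTop)).congr
      fun n => ?_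
    rw [Function.comp_apply, div_div, Real.mul_self_sqrt n.cast_nonneg]
  have hbound : Tendsto (fun n : ℕ =>
      √((K n : ℝ) / n + E0 n (lam / n) (fun G => LR n (lam / n) (Γ n) G ^ 2) - 1))
      atTop (nhds 0) := by
    simpa using ((hKn.add hL).sub_const 1).sqrt
  refine squeeze_zero_norm' ?_ hbound
  filter_upwards [hcard, hKn.eventually (gt_mem_nhds one_pos), eventually_gt_atTop 0,
    (tendsto_natCast_atTop_atTop (R := ℝ)).eventually_gt_atTop lam] with n hcardn hKn1 hn hlamn
  have hn' : (0 : ℝ) < n := Nat.cast_pos.2 hn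
  have hKle : K n ≤ n := by exact_mod_cast ((div_lt_one hn').1 hKn1).le
  simpa only [Fintype.card_fin, Real.norm_eq_abs] using
    abs_overlap_div_le (Γ n) (div_pos hlam hn') ((div_lt_one hn').2 hlamn) hn
      (by simpa using hKle) (kHat n) (fun G => by simp [hcardn G])

/-- if `K = o(√n)`, `E0[X_Γ] = ω(1)` and `E0[L²] = 1 + o(1)`, then every
estimator `K̂` of the planted set has overlap `o(K)`: reconstruction fails. -/
theorem statement_4 (lam : ℝ) (hlam : 0 < lam) (K : ℕ → ℕ)
    (Γ : (n : ℕ) → SimpleGraph (Fin (K n)))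
    (hK : Tendsto (fun n => (K n : ℝ) / Real.sqrt n) atTop (nhds 0))
    (hX : Tendsto (fun n => E0 n (lam / n) (fun G => (numCopies (Γ n) G : ℝ)))
      atTop atTop)
    (hL : Tendsto (fun n => E0 n (lam / n) (fun G => LR n (lam / n) (Γ n) G ^ 2))
      atTop (nhds 1))
    (kHat : (n : ℕ) → Graph n → Finset (Fin n))
    (hcard : ∀ᶠ n : ℕ in atTop, ∀ G : Graph n, (kHat n G).card = K n) :
    Tendsto (fun n => overlap n (lam / n) (Γ n) (kHat n) / K n) atTop (nhds 0) :=
  statement_4_general lam hlam K Γ hK hL kHat hcard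

end PlantedStructures
end

section
/- Fix an integer D ≥ 2 and 0 < λ < λ_D, and for n ∈ ℕ define h̄(n) = inf{h ≥ 1 : p_h < 1/n}. Then h̄(n) − ln(ln n)/ln(D) = O(1) as n → ∞; i.e. there exists a constant c such that |h̄(n) − ln(ln n)/ln(D)| ≤ c for all sufficiently large n. -/
open scoped Classical BigOperators
open Filter

namespace PlantedStructures

/-!
Since `λ < λ_D`, the iterates `p_h` decrease to `0`. The Poisson tail satisfies
`e^{-μ} μ^D / D! ≤ ψ_D(μ) ≤ μ^D / D!`, so `q_h = -log p_h` obeys `q_{h+1} = D q_h + O(1)`.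
Once `q_h` exceeds the fixed point of the affine maps bounding this recursion, it is
squeezed between two multiples of `D^h`; hence the first `h` with `q_h > log n`, which is
`h̄(n)`, equals `log log n / log D + O(1)`.
-/

open Real Topology

section Psi

variable {D : ℕ}

theorem exp_eq_tsum_pow_div_factorial (x : ℝ) : exp x = ∑' n : ℕ, x ^ n / n.factorial := by
  rw [exp_eq_exp_ℝ, NormedSpace.exp_eq_tsum_div]

theorem psi_eq_exp_neg_mul_tsum (μ : ℝ) :
    psi D μ = exp (-μ) * ∑' k : ℕ, μ ^ (k + D) / (k + D).factorial := by
  have hexp : exp μ = ∑ j ∈ Finset.range D, μ ^ j / j.factorial +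
      ∑' k : ℕ, μ ^ (k + D) / (k + D).factorial := by
    rw [exp_eq_tsum_pow_div_factorial,
      (Real.summable_pow_div_factorial μ).sum_add_tsum_nat_add D]
  rw [psi, eq_sub_of_add_eq' hexp.symm, mul_sub, ← exp_add, neg_add_cancel, exp_zero,
    Finset.mul_sum]
  simp only [mul_div_assoc]

theorem exp_neg_mul_pow_div_factorial_le_psi {μ : ℝ} (hμ : 0 ≤ μ) :
    exp (-μ) * (μ ^ D / D.factorial) ≤ psi D μ := by
  rw [psi_eq_exp_neg_mul_tsum]
  gcongr
  simpa using ((summable_nat_add_iff D).2 (Real.summable_pow_div_factorial μ)).le_tsum 0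
    (fun j _ => by positivity)

theorem psi_nonneg {μ : ℝ} (hμ : 0 ≤ μ) : 0 ≤ psi D μ :=
  (by positivity : (0 : ℝ) ≤ exp (-μ) * (μ ^ D / D.factorial)).trans
    (exp_neg_mul_pow_div_factorial_le_psi hμ)

theorem psi_pos {μ : ℝ} (hμ : 0 < μ) : 0 < psi D μ :=
  (by positivity : (0 : ℝ) < exp (-μ) * (μ ^ D / D.factorial)).trans_le
    (exp_neg_mul_pow_div_factorial_le_psi hμ.le)

theorem psi_le_one {μ : ℝ} (hμ : 0 ≤ μ) : psi D μ ≤ 1 := by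
  rw [psi, sub_le_self_iff]
  exact Finset.sum_nonneg fun j _ => by positivity

theorem psi_le_pow_div_factorial {μ : ℝ} (hμ : 0 ≤ μ) : psi D μ ≤ μ ^ D / D.factorial := by
  have hterm (k : ℕ) : μ ^ (k + D) / (k + D).factorial ≤
      μ ^ D / D.factorial * (μ ^ k / k.factorial) := by
    have hfac : (D.factorial * k.factorial : ℝ) ≤ (k + D).factorial := by
      rw [add_comm k D]
      exact_mod_cast Nat.le_of_dvd (Nat.factorial_pos _)
        (Nat.factorial_mul_factorial_dvd_factorial_add D k)
    rw [div_mul_div_comm, pow_add, mul_comm (μ ^ k)]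
    gcongr
  calc psi D μ ≤ exp (-μ) * ∑' k : ℕ, μ ^ D / D.factorial * (μ ^ k / k.factorial) := by
        rw [psi_eq_exp_neg_mul_tsum]
        exact mul_le_mul_of_nonneg_left (Summable.tsum_le_tsum hterm
          ((summable_nat_add_iff D).2 (Real.summable_pow_div_factorial μ))
          ((Real.summable_pow_div_factorial μ).mul_left _)) (exp_pos _).le
    _ = μ ^ D / D.factorial := by
        rw [tsum_mul_left, ← exp_eq_tsum_pow_div_factorial, mul_left_comm, ← exp_add,
          neg_add_cancel, exp_zero, mul_one]

theorem continuous_psi : Continuous (psi D) := by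
  unfold psi
  fun_prop

theorem hasDerivAt_psi_succ (d : ℕ) (μ : ℝ) :
    HasDerivAt (psi (d + 1)) (exp (-μ) * μ ^ d / d.factorial) μ := by
  have hexp : HasDerivAt (fun x : ℝ => exp (-x)) (-exp (-μ)) μ := by
    simpa using (hasDerivAt_neg μ).exp
  suffices HasDerivAt (fun x => ∑ j ∈ Finset.range (d + 1), exp (-x) * x ^ j / j.factorial)
      (-(exp (-μ) * μ ^ d / d.factorial)) μ by
    unfold psi
    simpa using this.const_sub 1
  induction d with
  | zero => simpa using hexp
  | succ d ih =>
    simp_rw [Finset.sum_range_succ _ (d + 1)]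
    refine (ih.add ((hexp.mul (hasDerivAt_pow (d + 1) μ)).div_const
      ((d + 1).factorial : ℝ))).congr_deriv ?_
    rw [Nat.factorial_succ]
    push_cast
    field_simp
    ring

theorem monotoneOn_psi : MonotoneOn (psi D) (Set.Ici 0) := by
  cases D with
  | zero => simp [MonotoneOn, psi]
  | succ d =>
    refine monotoneOn_of_deriv_nonneg (convex_Ici 0) continuous_psi.continuousOn
      (fun x _ => (hasDerivAt_psi_succ d x).differentiableAt.differentiableWithinAt)
      fun x hx => ?_
    rw [interior_Ici] at hx
    rw [(hasDerivAt_psi_succ d x).deriv]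
    have : 0 < x := hx
    positivity

end Psi

section Pseq

variable {D : ℕ} {lam : ℝ}

theorem pseq_succ {h : ℕ} (hh : 1 ≤ h) : pseq D lam (h + 1) = psi D (lam * pseq D lam h) := by
  obtain ⟨k, rfl⟩ := Nat.exists_eq_add_of_le' hh
  rfl

theorem pseq_nonneg (hlam : 0 ≤ lam) : ∀ h, 0 ≤ pseq D lam h
  | 0 | 1 => zero_le_one
  | h + 2 => psi_nonneg (mul_nonneg hlam (pseq_nonneg hlam (h + 1)))

theorem pseq_pos (hlam : 0 < lam) : ∀ h, 0 < pseq D lam h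
  | 0 | 1 => one_pos
  | h + 2 => psi_pos (mul_pos hlam (pseq_pos hlam (h + 1)))

theorem pseq_le_one (hlam : 0 ≤ lam) : ∀ h, pseq D lam h ≤ 1
  | 0 | 1 => le_rfl
  | h + 2 => psi_le_one (mul_nonneg hlam (pseq_nonneg hlam (h + 1)))

theorem pseq_succ_le (hlam : 0 ≤ lam) : ∀ h, pseq D lam (h + 1) ≤ pseq D lam h
  | 0 => le_rfl
  | 1 => psi_le_one (mul_nonneg hlam zero_le_one)
  | h + 2 => monotoneOn_psi (mul_nonneg hlam (pseq_nonneg hlam _))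
      (mul_nonneg hlam (pseq_nonneg hlam _))
      (mul_le_mul_of_nonneg_left (pseq_succ_le hlam (h + 1)) hlam)

theorem pseq_antitone (hlam : 0 ≤ lam) : Antitone (pseq D lam) :=
  antitone_nat_of_succ_le (pseq_succ_le hlam)

theorem pseq_le_pseq_of_le {lam' : ℝ} (hlam : 0 ≤ lam) (hle : lam ≤ lam') :
    ∀ h, pseq D lam h ≤ pseq D lam' h
  | 0 | 1 => le_rfl
  | h + 2 => monotoneOn_psi (mul_nonneg hlam (pseq_nonneg hlam _))
      (mul_nonneg (hlam.trans hle) (pseq_nonneg (hlam.trans hle) _))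
      (mul_le_mul hle (pseq_le_pseq_of_le hlam hle (h + 1)) (pseq_nonneg hlam _) (hlam.trans hle))

theorem le_pstar (hlam : 0 ≤ lam) {p : ℝ} (hp0 : 0 ≤ p) (hp : p = psi D (lam * p)) :
    p ≤ pstar D lam :=
  le_csSup ⟨1, fun _ hx => hx.2 ▸ psi_le_one (mul_nonneg hlam hx.1)⟩ ⟨hp0, hp⟩

theorem exists_fixedPoint_tendsto_pseq (hlam : 0 ≤ lam) :
    ∃ L, 0 ≤ L ∧ L = psi D (lam * L) ∧ Tendsto (pseq D lam) atTop (𝓝 L) := by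
  have htend := tendsto_atTop_ciInf (pseq_antitone (D := D) hlam) ⟨0, by
    rintro _ ⟨h, rfl⟩
    exact pseq_nonneg hlam h⟩
  refine ⟨⨅ h, pseq D lam h, le_ciInf (pseq_nonneg hlam), ?_, htend⟩
  exact tendsto_nhds_unique (htend.comp (tendsto_add_atTop_nat 2))
    ((continuous_psi.tendsto _).comp ((htend.comp (tendsto_add_atTop_nat 1)).const_mul lam))

theorem tendsto_pseq_zero_of_pstar_eq_zero (hlam : 0 ≤ lam) (h : pstar D lam = 0) :
    Tendsto (pseq D lam) atTop (𝓝 0) := by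
  obtain ⟨L, hL0, hL, htend⟩ := exists_fixedPoint_tendsto_pseq (D := D) hlam
  rwa [le_antisymm ((le_pstar hlam hL0 hL).trans h.le) hL0] at htend

/-- Below the threshold, the iteration is dominated by the one at a larger `λ'` with
`p*(D, λ') = 0`, whose limit is a fixed point and hence `0`. -/
theorem tendsto_pseq_zero (hlam : 0 ≤ lam) (hsub : lam < lambdaD D) :
    Tendsto (pseq D lam) atTop (𝓝 0) := by
  have hne : {l : ℝ | 0 < l ∧ pstar D l = 0}.Nonempty := by
    by_contra hempty
    rw [Set.not_nonempty_iff_eq_empty] at hempty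
    rw [lambdaD, hempty, Real.sSup_empty] at hsub
    linarith
  obtain ⟨lam', ⟨hlam', hzero⟩, hlt⟩ := exists_lt_of_lt_csSup hne hsub
  exact tendsto_of_tendsto_of_tendsto_of_le_of_le tendsto_const_nhds
    (tendsto_pseq_zero_of_pstar_eq_zero hlam'.le hzero) (pseq_nonneg hlam)
    (pseq_le_pseq_of_le hlam hlt.le)

end Pseq

section Growth

variable {D : ℕ} {lam : ℝ}

theorem mul_pow_le_psi_mul (hlam : 0 ≤ lam) {p : ℝ} (hp0 : 0 ≤ p) (hp1 : p ≤ 1) :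
    exp (-lam) * (lam ^ D / D.factorial) * p ^ D ≤ psi D (lam * p) := by
  calc exp (-lam) * (lam ^ D / D.factorial) * p ^ D
      = exp (-lam) * ((lam * p) ^ D / D.factorial) := by ring
    _ ≤ exp (-(lam * p)) * ((lam * p) ^ D / D.factorial) := by
      gcongr
      exact mul_le_of_le_one_right hlam hp1
    _ ≤ psi D (lam * p) := exp_neg_mul_pow_div_factorial_le_psi (mul_nonneg hlam hp0)

theorem psi_mul_le_mul_pow (hlam : 0 ≤ lam) {p : ℝ} (hp0 : 0 ≤ p) :
    psi D (lam * p) ≤ lam ^ D / D.factorial * p ^ D :=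
  (psi_le_pow_div_factorial (mul_nonneg hlam hp0)).trans_eq (by ring)

theorem neg_log_pseq_succ_bounds (hlam : 0 < lam) {h : ℕ} (hh : 1 ≤ h) :
    D * -log (pseq D lam h) - |log (lam ^ D / D.factorial)| ≤ -log (pseq D lam (h + 1)) ∧
      -log (pseq D lam (h + 1)) ≤
        D * -log (pseq D lam h) + |log (exp (-lam) * (lam ^ D / D.factorial))| := by
  have hp := pseq_pos (D := D) hlam h
  have hlow := mul_pow_le_psi_mul (D := D) hlam.le hp.le (pseq_le_one hlam.le h)
  have hup := psi_mul_le_mul_pow (D := D) hlam.le hp.le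
  rw [← pseq_succ hh] at hlow hup
  have hlog_low := log_le_log (by positivity) hlow
  have hlog_up := log_le_log (pseq_pos hlam _) hup
  rw [log_mul (by positivity) (by positivity), log_pow] at hlog_low hlog_up
  constructor <;> linarith [le_abs_self (log (lam ^ D / D.factorial)),
    neg_abs_le (log (exp (-lam) * (lam ^ D / D.factorial)))]

end Growth

theorem exists_pow_bounds_of_mul_sub_le {d a b : ℝ} (hd : 1 < d) (ha : 0 ≤ a) (hb : 0 ≤ b)
    {q : ℕ → ℝ} (hq : ∀ k, d * q k - a ≤ q (k + 1) ∧ q (k + 1) ≤ d * q k + b)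
    (hq0 : a / (d - 1) < q 0) :
    ∃ A B : ℝ, 0 < A ∧ 0 < B ∧ ∀ k, A * d ^ k ≤ q k ∧ q k ≤ B * d ^ k := by
  have hd1 : 0 < d - 1 := sub_pos.2 hd
  have ha' : 0 ≤ a / (d - 1) := by positivity
  have hb' : 0 ≤ b / (d - 1) := by positivity
  refine ⟨q 0 - a / (d - 1), q 0 + b / (d - 1), by linarith, by linarith, fun k => ⟨?_, ?_⟩⟩
  · -- `a / (d - 1)` is the fixed point of `x ↦ d x - a`
    have hstep : ∀ j < k, d * (q j - a / (d - 1)) ≤ q (j + 1) - a / (d - 1) := by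
      intro j _
      have : d * (a / (d - 1)) = a + a / (d - 1) := by field_simp; ring
      linarith [(hq j).1]
    have := geom_le (u := fun j => q j - a / (d - 1)) (by linarith) k hstep
    linarith [mul_comm (d ^ k) (q 0 - a / (d - 1))]
  · have hstep : ∀ j < k, q (j + 1) + b / (d - 1) ≤ d * (q j + b / (d - 1)) := by
      intro j _
      have : d * (b / (d - 1)) = b + b / (d - 1) := by field_simp; ring
      linarith [(hq j).2]
    have := le_geom (u := fun j => q j + b / (d - 1)) (by linarith) k hstep
    linarith [mul_comm (d ^ k) (q 0 + b / (d - 1))]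

theorem abs_sub_log_div_log_le {d A B L : ℝ} {k : ℕ} (hd : 1 < d) (hA : 0 < A) (hB : 0 < B)
    (hlow : A * d ^ k ≤ L) (hup : L < B * d ^ (k + 1)) :
    |(k : ℝ) - log L / log d| ≤ 1 + (|log A| + |log B|) / log d := by
  have hlogd : 0 < log d := log_pos hd
  have hd0 : 0 < d := by linarith
  have hlog_low := log_le_log (by positivity) hlow
  have hlog_up := log_lt_log ((mul_pos hA (pow_pos hd0 k)).trans_le hlow) hup
  rw [log_mul hA.ne' (by positivity), log_pow] at hlog_low
  rw [log_mul hB.ne' (by positivity), log_pow] at hlog_up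
  have hsplit : (k : ℝ) - log L / log d = (k * log d - log L) / log d := by field_simp
  rw [hsplit, abs_div, abs_of_pos hlogd, div_le_iff₀ hlogd, add_mul,
    div_mul_cancel₀ _ hlogd.ne', one_mul, abs_le]
  push_cast at hlog_up
  rw [add_one_mul] at hlog_up
  constructor <;> linarith [neg_abs_le (log A), le_abs_self (log B), abs_nonneg (log A),
    abs_nonneg (log B)]

theorem exists_sInf_setOf_lt_eq {u : ℕ → ℝ} (hu : Antitone u) (hlim : Tendsto u atTop (𝓝 0))
    {ε : ℝ} (hε : 0 < ε) {h₀ : ℕ} (hh₀ : 1 ≤ h₀) (hεh₀ : ε ≤ u h₀) :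
    ∃ k, sInf {h | 1 ≤ h ∧ u h < ε} = h₀ + k + 1 ∧ ε ≤ u (h₀ + k) ∧ u (h₀ + k + 1) < ε := by
  set S := {h | 1 ≤ h ∧ u h < ε}
  have hne : S.Nonempty :=
    (((hlim.eventually (gt_mem_nhds hε)).and (eventually_ge_atTop 1)).exists).imp
      fun _ h => ⟨h.2, h.1⟩
  obtain ⟨-, hlt⟩ := Nat.sInf_mem hne
  have hgt : h₀ < sInf S := by
    by_contra! hle
    exact ((hu hle).trans_lt hlt).not_ge hεh₀
  obtain ⟨k, hk⟩ : ∃ k, sInf S = h₀ + k + 1 := ⟨sInf S - h₀ - 1, by omega⟩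
  refine ⟨k, hk, ?_, hk ▸ hlt⟩
  by_contra! hlt'
  have := Nat.sInf_le (show h₀ + k ∈ S from ⟨by omega, hlt'⟩)
  omega

theorem one_div_le_iff_neg_log_le {x y : ℝ} (hx : 0 < x) (hy : 0 < y) :
    1 / x ≤ y ↔ -log y ≤ log x := by
  rw [← log_le_log_iff (by positivity) hy, one_div, log_inv, neg_le]

/-- for `D ≥ 2` and `0 < λ < λ_D`, the threshold
`h̄(n) = inf{h ≥ 1 : p_h < 1/n}` satisfies `h̄(n) = ln ln n / ln D + O(1)`. -/
theorem statement_14 (D : ℕ) (hD : 2 ≤ D) (lam : ℝ) (hlam : 0 < lam)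
    (hsub : lam < lambdaD D) :
    ∃ c : ℝ, ∀ᶠ n : ℕ in atTop,
      |(hbar D lam n : ℝ) - Real.log (Real.log n) / Real.log D| ≤ c := by
  have hD1 : (1 : ℝ) < D := by exact_mod_cast hD
  set q : ℕ → ℝ := fun h => -log (pseq D lam h)
  set a := |log (lam ^ D / D.factorial)|
  have hlim := tendsto_pseq_zero hlam.le hsub
  obtain ⟨h₀, hp₀, hh₀⟩ := ((hlim.eventually (gt_mem_nhds (exp_pos (-(a / (D - 1)))))).and
    (eventually_ge_atTop 1)).exists
  have hq₀ : a / (D - 1) < q h₀ :=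
    lt_neg_of_lt_neg ((log_lt_iff_lt_exp (pseq_pos hlam h₀)).2 hp₀)
  obtain ⟨A, B, hA, hB, hAB⟩ := exists_pow_bounds_of_mul_sub_le hD1 (abs_nonneg _)
    (abs_nonneg _) (q := fun k => q (h₀ + k))
    (fun k => neg_log_pseq_succ_bounds (D := D) hlam (by omega : 1 ≤ h₀ + k)) hq₀
  refine ⟨h₀ + 1 + (1 + (|log A| + |log B|) / log D), ?_⟩
  filter_upwards [eventually_gt_atTop 0, (tendsto_one_div_atTop_nhds_zero_nat.eventually
    (gt_mem_nhds (pseq_pos (D := D) hlam h₀)))] with n hn hn₀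
  have hn' : (0 : ℝ) < n := Nat.cast_pos.2 hn
  obtain ⟨k, hk, hle, hlt⟩ := exists_sInf_setOf_lt_eq (pseq_antitone hlam.le) hlim
    (one_div_pos.2 hn') hh₀ hn₀.le
  have hlow : A * (D : ℝ) ^ k ≤ log n :=
    (hAB k).1.trans ((one_div_le_iff_neg_log_le hn' (pseq_pos hlam _)).1 hle)
  have hup : log n < B * (D : ℝ) ^ (k + 1) :=
    (not_le.1 ((one_div_le_iff_neg_log_le hn' (pseq_pos hlam _)).not.1 hlt.not_ge)).trans_le
      (hAB (k + 1)).2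
  have hbound := abs_sub_log_div_log_le hD1 hA hB hlow hup
  rw [hbar, hk]
  push_cast
  rw [abs_le] at hbound ⊢
  constructor <;> linarith

end PlantedStructures
end
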